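/- Let h ≥ 1 be an integer, let Q = Q_{h+3} ⊂ ℝ^3 be the convex hull of {(0,0,0),(1,0,0),(0,1,0),(0,0,1),(1,0,1),(0,1,1),(1,1,h+3),(1,1,h+4)}, and let Q' ⊂ ℝ^4 be the convex hull of {(α,1) : α a vertex of Q} ∪ {(0,0,0,0)}. Then for every integer m ≥ 2 the point (1,1,3,2,m) ∈ ℤ^5 is a hole of Q'; consequently Q' has infinitely many holes and is not very ample. -/

import Mathlib

open Finset

noncomputable section

/-- Cast an integer lattice point to a real point. -/
def castPt {d : ℕ} (a : Fin d → ℤ) : Fin d → ℝ := fun i => (a i : ℝ)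

/-- The cone of nonnegative real combinations of a set of vectors. -/
def coneOf {d : ℕ} (A : Set (Fin d → ℝ)) : Set (Fin d → ℝ) :=
  {x | ∃ (n : ℕ) (c : Fin n → ℝ) (v : Fin n → (Fin d → ℝ)),
    (∀ i, 0 ≤ c i) ∧ (∀ i, v i ∈ A) ∧ x = ∑ i, c i • v i}

/-- `A_P = {(α,1) : α ∈ P ∩ ℤ^d} ⊂ ℤ^(d+1)`. -/
def APts {d : ℕ} (P : Set (Fin d → ℝ)) : Set (Fin (d+1) → ℤ) :=
  {b | b (Fin.last d) = 1 ∧ castPt (fun i : Fin d => b i.castSucc) ∈ P}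

/-- `Q' ⊂ ℝ^4`: the pyramid over `Q_{h+3}` lifted at height 1, together with the origin. -/
def Qpyr (h : ℤ) : Set (Fin 4 → ℝ) := convexHull ℝ
  ({![0,0,0,1], ![1,0,0,1], ![0,1,0,1], ![0,0,1,1], ![1,0,1,1], ![0,1,1,1],
    ![1,1,(h : ℝ)+3,1], ![1,1,(h : ℝ)+4,1], ![0,0,0,0]} : Set (Fin 4 → ℝ))


/-!
At height one the lattice points of `Q'` over `(1, 0)`, `(0, 1)` and `(0, 0)` have third
coordinate at most `1`, those over `(1, 1)` at least `h + 3`, and at height zero only the origin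
lies in `Q'`. So a sum of generators over `(1, 1)` at height two has third coordinate `≤ 2` or
`≥ h + 3`, and this property is inherited by the whole monoid generated by `A_{Q'}`; as `h ≥ 1`,
the value `3` is excluded. On the other hand `(1, 1, 3, 2, m)` is an explicit integer combination
of points of `A_{Q'}`, and a nonnegative real one with weights `1 / (h + 2)`.
-/

def qpyrVertices (h : ℤ) : Set (Fin 4 → ℝ) :=
  {![0,0,0,1], ![1,0,0,1], ![0,1,0,1], ![0,0,1,1], ![1,0,1,1], ![0,1,1,1],
    ![1,1,(h : ℝ)+3,1], ![1,1,(h : ℝ)+4,1], ![0,0,0,0]}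

/-- `(b 0, b 1, b 2) ∈ b 3 • Q_{h+3}`, written out by the facet inequalities of `Q_{h+3}`. -/
def MemConeQ (h : ℤ) (b : Fin 5 → ℤ) : Prop :=
  0 ≤ b 0 ∧ b 0 ≤ b 3 ∧ 0 ≤ b 1 ∧ b 1 ≤ b 3 ∧ 0 ≤ b 2 ∧
    b 2 ≤ b 3 + (h + 3) * b 0 ∧ b 2 ≤ b 3 + (h + 3) * b 1 ∧
    (h + 3) * (b 0 + b 1 - b 3) ≤ b 2

def AvoidsGap (h : ℤ) (b : Fin 5 → ℤ) : Prop :=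
  MemConeQ h b ∧ (b 3 = 2 → b 0 = 1 → b 1 = 1 → b 2 ≤ 2 ∨ h + 3 ≤ b 2)

lemma Qpyr_subset (h : ℤ) (hh : 0 ≤ h + 3) :
    Qpyr h ⊆ {x | 0 ≤ x 0 ∧ x 0 ≤ x 3 ∧ 0 ≤ x 1 ∧ x 1 ≤ x 3 ∧ 0 ≤ x 2 ∧
      x 2 ≤ x 3 + (h + 3) * x 0 ∧ x 2 ≤ x 3 + (h + 3) * x 1 ∧
      (h + 3) * (x 0 + x 1 - x 3) ≤ x 2 ∧ x 3 ≤ 1} := by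
  have hh' : (0 : ℝ) ≤ h + 3 := by exact_mod_cast hh
  refine convexHull_min ?_ ?_
  · rintro v hv
    simp only [Set.mem_insert_iff, Set.mem_singleton_iff] at hv
    rcases hv with rfl | rfl | rfl | rfl | rfl | rfl | rfl | rfl | rfl <;>
      simp <;> and_intros <;> linarith
  · intro x hx y hy a b ha hb hab
    simp only [Set.mem_ofPred_eq, Pi.add_apply, Pi.smul_apply, smul_eq_mul] at *
    obtain ⟨x1, x2, x3, x4, x5, x6, x7, x8, x9⟩ := hx
    obtain ⟨y1, y2, y3, y4, y5, y6, y7, y8, y9⟩ := hy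
    and_intros <;> nlinarith

lemma castPt_castSucc (b : Fin 5 → ℤ) :
    castPt (fun i : Fin 4 => b i.castSucc) = ![(b 0 : ℝ), b 1, b 2, b 3] := by
  funext i; fin_cases i <;> rfl

lemma mem_APts_Qpyr_of_mem_vertices {h : ℤ} {b : Fin 5 → ℤ} (hb4 : b 4 = 1)
    (hb : ![(b 0 : ℝ), b 1, b 2, b 3] ∈ qpyrVertices h) : b ∈ APts (Qpyr h) :=
  ⟨hb4, castPt_castSucc b ▸ subset_convexHull ℝ _ hb⟩

lemma MemConeQ.of_mem_APts {h : ℤ} (hh : 0 ≤ h + 3) {b : Fin 5 → ℤ}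
    (hb : b ∈ APts (Qpyr h)) :
    MemConeQ h b ∧ b 3 ≤ 1 := by
  have hx := Qpyr_subset h hh hb.2
  simp only [castPt_castSucc, Set.mem_ofPred_eq, Matrix.cons_val] at hx
  simp only [MemConeQ, and_assoc]
  exact_mod_cast hx

section Monoid

variable {h : ℤ} {a b : Fin 5 → ℤ}

lemma MemConeQ.add (ha : MemConeQ h a) (hb : MemConeQ h b) : MemConeQ h (a + b) := by
  obtain ⟨a1, a2, a3, a4, a5, a6, a7, a8⟩ := ha
  obtain ⟨b1, b2, b3, b4, b5, b6, b7, b8⟩ := hb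
  simp only [MemConeQ, Pi.add_apply]
  and_intros <;> linarith

lemma MemConeQ.eq_zero_of_level_zero (ha : MemConeQ h a) (h3 : a 3 = 0) :
    a 0 = 0 ∧ a 1 = 0 ∧ a 2 = 0 := by
  obtain ⟨a1, a2, a3, a4, a5, a6, -⟩ := ha
  obtain ⟨h0, h1⟩ : a 0 = 0 ∧ a 1 = 0 := by omega
  rw [h0, h3] at a6
  omega

lemma MemConeQ.level_one (ha : MemConeQ h a) (h3 : a 3 = 1) :
    (a 0 = 0 ∨ a 1 = 0 → a 2 ≤ 1) ∧ (a 0 = 1 → a 1 = 1 → h + 3 ≤ a 2) := by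
  obtain ⟨-, -, -, -, -, a6, a7, a8⟩ := ha
  refine ⟨?_, fun h0 h1 => ?_⟩
  · rintro (h0 | h1)
    · simpa [h0, h3] using a6
    · simpa [h1, h3] using a7
  · simpa [h0, h1, h3] using a8

lemma AvoidsGap.add (ha : AvoidsGap h a) (hb : AvoidsGap h b) : AvoidsGap h (a + b) := by
  refine ⟨ha.1.add hb.1, fun h3 h0 h1 => ?_⟩
  simp only [Pi.add_apply] at h3 h0 h1 ⊢
  obtain ⟨⟨a0, a03, a1, a13, a2, -⟩, -⟩ := id ha
  obtain ⟨⟨b0, b03, b1, b13, b2, -⟩, -⟩ := id hb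
  rcases (by omega : a 3 = 0 ∨ a 3 = 1 ∨ b 3 = 0) with ha3 | ha3 | hb3
  · have := ha.1.eq_zero_of_level_zero ha3
    have := hb.2 (by omega) (by omega) (by omega)
    omega
  · have := ha.1.level_one ha3
    have := hb.1.level_one (by omega)
    omega
  · have := hb.1.eq_zero_of_level_zero hb3
    have := ha.2 (by omega) (by omega) (by omega)
    omega

lemma AvoidsGap.of_mem_closure (hh : 0 ≤ h + 3)
    (hb : b ∈ AddSubmonoid.closure (APts (Qpyr h))) : AvoidsGap h b := by
  induction hb using AddSubmonoid.closure_induction with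
  | mem b hb =>
    obtain ⟨hcone, hlevel⟩ := MemConeQ.of_mem_APts hh hb
    exact ⟨hcone, fun h3 => by omega⟩
  | zero => exact ⟨by simp [MemConeQ], by simp⟩
  | add a b _ _ ha hb => exact ha.add hb

end Monoid

lemma not_mem_addSubmonoidClosure (h : ℤ) (hh : 1 ≤ h) (m : ℤ) :
    (![1, 1, 3, 2, m] : Fin 5 → ℤ) ∉ AddSubmonoid.closure (APts (Qpyr h)) := fun hmem => by
  have := (AvoidsGap.of_mem_closure (by omega) hmem).2 rfl rfl rfl
  simp at this
  omega

lemma mem_addSubgroupClosure (h m : ℤ) :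
    (![1, 1, 3, 2, m] : Fin 5 → ℤ) ∈ AddSubgroup.closure (APts (Qpyr h)) := by
  have hsum : (![1, 1, 3, 2, m] : Fin 5 → ℤ) =
      ![1, 0, 1, 1, 1] + ![0, 1, 1, 1, 1] + ![0, 0, 1, 1, 1] -
        ![0, 0, 0, 1, 1] + (m - 2) • ![0, 0, 0, 0, 1] := by
    funext j; fin_cases j <;> simp
  rw [hsum]
  refine add_mem (sub_mem (add_mem (add_mem ?_ ?_) ?_) ?_) (zsmul_mem ?_ _) <;>
    exact AddSubgroup.subset_closure (mem_APts_Qpyr_of_mem_vertices rfl (by simp [qpyrVertices]))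

lemma mem_coneOf (h : ℤ) (hh : -1 ≤ h) (m : ℤ) (hm : 2 ≤ m) :
    castPt ![1, 1, 3, 2, m] ∈ coneOf (castPt '' APts (Qpyr h)) := by
  have hh' : (-1 : ℝ) ≤ h := by exact_mod_cast hh
  have hm' : (2 : ℝ) ≤ m := by exact_mod_cast hm
  obtain ⟨β, hβ⟩ : ∃ β : ℝ, β * (h + 2) = 1 :=
    ⟨(h + 2)⁻¹, inv_mul_cancel₀ (by linarith)⟩
  have hβ0 : 0 ≤ β := by nlinarith
  have hβ1 : β ≤ 1 := by nlinarith
  refine ⟨5, ![1 - β, 1 - β, β, β, m - 2],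
    ![castPt ![1, 0, 1, 1, 1], castPt ![0, 1, 1, 1, 1], castPt ![1, 1, h + 3, 1, 1],
      castPt ![0, 0, 1, 1, 1], castPt ![0, 0, 0, 0, 1]], ?_, ?_, ?_⟩
  · intro i; fin_cases i <;> simp <;> linarith
  · intro i
    fin_cases i <;>
      exact ⟨_, mem_APts_Qpyr_of_mem_vertices rfl (by simp [qpyrVertices]), rfl⟩
  · funext j
    fin_cases j <;> simp [castPt, Fin.sum_univ_five] <;> linarith

theorem stmt_3 (h : ℤ) (hh : 1 ≤ h) :
    (∀ m : ℤ, 2 ≤ m →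
      castPt (![1, 1, 3, 2, m]) ∈ coneOf (castPt '' APts (Qpyr h)) ∧
      (![1, 1, 3, 2, m] : Fin 5 → ℤ) ∈ AddSubgroup.closure (APts (Qpyr h)) ∧
      (![1, 1, 3, 2, m] : Fin 5 → ℤ) ∉ AddSubmonoid.closure (APts (Qpyr h))) ∧
    {b : Fin 5 → ℤ | castPt b ∈ coneOf (castPt '' APts (Qpyr h)) ∧
      b ∈ AddSubgroup.closure (APts (Qpyr h)) ∧
      b ∉ AddSubmonoid.closure (APts (Qpyr h))}.Infinite := by
  have hole (m : ℤ) (hm : 2 ≤ m) :=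
    And.intro (mem_coneOf h (by omega) m hm) <|
      And.intro (mem_addSubgroupClosure h m) (not_mem_addSubmonoidClosure h hh m)
  refine ⟨hole, Set.infinite_of_injective_forall_mem
    (f := fun n : ℕ => ![1, 1, 3, 2, (n : ℤ) + 2])
    (fun a b hab => by simpa using congrFun hab 4) (fun n => hole _ (by omega))⟩

end
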